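/- Let X : Δ^op → V be a Segal object in a category V with finite limits, equipped with a factorization system (V^L, V^R) whose right class V^R is stable under base change (in the arrow category) and composition. If the face map d₀ : X₁ → X₀ lies in V^R, then for every n ≥ 1 the face map d₀ : X_n → X_{n-1} lies in V^R; i.e. X is right-V^R-fibered. -/

import Mathlib

open CategoryTheory CategoryTheory.Limits Simplicial Opposite SimplexCategory

/-- The inclusion of the initial segment `[n] ↪ [n+m]`. -/
def segFirst (n m : ℕ) : SimplexCategory.mk n ⟶ SimplexCategory.mk (n + m) :=
  SimplexCategory.mkHom ⟨fun i => ⟨(i : ℕ), by omega⟩, fun a b h => by simpa using h⟩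

/-- The inclusion of the final segment `[m] ↪ [n+m]`, `i ↦ n + i`. -/
def segLast (n m : ℕ) : SimplexCategory.mk m ⟶ SimplexCategory.mk (n + m) :=
  SimplexCategory.mkHom ⟨fun i => ⟨n + (i : ℕ), by omega⟩, fun a b h => by
    simp only [Fin.mk_le_mk]; omega⟩

variable {C : Type*} [Category C]

/-- A simplicial object is a Segal object if the canonical squares expressing
`X(Δ^{n+m}) ≃ X(Δ^n) ×_{X(Δ⁰)} X(Δ^m)` (via the inert inclusions of the initial and
final segments and the shared vertex) are pullback squares; this is equivalent to the
usual spine condition `Xₙ ≃ X₁ ×_{X₀} ⋯ ×_{X₀} X₁`. -/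
def IsSegal (X : SimplicialObject C) : Prop :=
  ∀ n m : ℕ, IsPullback (X.map (segFirst n m).op) (X.map (segLast n m).op)
    (X.map (SimplexCategory.const (SimplexCategory.mk 0) (SimplexCategory.mk n) (Fin.last n)).op)
    (X.map (SimplexCategory.const (SimplexCategory.mk 0) (SimplexCategory.mk m) 0).op)

lemma SimplexCategory.const_last_one_eq_δ_zero :
    const (mk 0) (mk 1) (Fin.last 1) = δ (0 : Fin 2) := by
  ext i
  fin_cases i
  rfl

lemma segLast_one_comp_eqToHom (n : ℕ) :
    segLast 1 n ≫ eqToHom (congrArg mk (Nat.add_comm 1 n)) = δ (0 : Fin (n + 2)) := by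
  ext i
  simp [segLast, SimplexCategory.δ, add_comm]

lemma SimplicialObject.δ_zero_eq_eqToHom_comp_map_segLast (X : SimplicialObject C) (n : ℕ) :
    X.δ (0 : Fin (n + 2)) =
      X.map (eqToHom (congrArg mk (Nat.add_comm 1 n))).op ≫ X.map (segLast 1 n).op := by
  rw [← X.map_comp, ← op_comp, segLast_one_comp_eqToHom]
  rfl

theorem stmt_11_general (R : MorphismProperty C)
    [R.IsStableUnderBaseChange]
    (X : SimplicialObject C) (hX : IsSegal X)
    (h₁ : R (X.δ (0 : Fin 2))) :
    ∀ n : ℕ, R (X.δ (0 : Fin (n + 2))) := by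
  intro n
  -- `d₀ : Xₙ₊₁ ⟶ Xₙ` is, up to `X₁₊ₙ = Xₙ₊₁`, the base change of `d₀ : X₁ ⟶ X₀` in the Segal square.
  have hbase : R (X.map (segLast 1 n).op) :=
    R.of_isPullback (hX 1 n) (by rwa [const_last_one_eq_δ_zero])
  rw [SimplicialObject.δ_zero_eq_eqToHom_comp_map_segLast, R.cancel_left_of_respectsIso]
  exact hbase

/-- For a Segal object `X` in a category with finite limits equipped with a class `R`
of morphisms (the right class of a factorization system) stable under composition and
base change: if `d₀ : X₁ ⟶ X₀` lies in `R`, then `d₀ : Xₙ ⟶ Xₙ₋₁` lies in `R` for all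
`n ≥ 1`, i.e. `X` is right-`R`-fibered. -/
theorem stmt_11 [HasFiniteLimits C] (R : MorphismProperty C)
    [R.IsStableUnderComposition] [R.IsStableUnderBaseChange]
    (X : SimplicialObject C) (hX : IsSegal X)
    (h₁ : R (X.δ (0 : Fin 2))) :
    ∀ n : ℕ, R (X.δ (0 : Fin (n + 2))) :=
  stmt_11_general R X hX h₁
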